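/- Let Γ be a free group of finite rank, p a prime, and k ≥ 1, and let π : Γ/Γ^S_{k+2} → Γ/Γ^S_{k+1} be the canonical projection. For every automorphism φ of Γ/Γ^S_{k+1} there exists an automorphism Φ of Γ/Γ^S_{k+2} such that π ∘ Φ = φ ∘ π. -/

import Mathlib

open scoped commutatorElement

def stallings (p : ℕ) (G : Type*) [Group G] : ℕ → Subgroup G
  | 0 => ⊤
  | 1 => ⊤
  | (k + 2) =>
    Subgroup.closure
      {x : G | (∃ g : G, ∃ y ∈ stallings p G (k + 1), x = ⁅g, y⁆) ∨
        ∃ y ∈ stallings p G (k + 1), x = y ^ p}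

theorem closure_normal_of_conj {G : Type*} [Group G] {s : Set G}
    (h : ∀ g : G, ∀ x ∈ s, g * x * g⁻¹ ∈ s) : (Subgroup.closure s).Normal := by
  constructor
  intro n hn g
  have key : Subgroup.closure s ≤
      Subgroup.comap (MulAut.conj g).toMonoidHom (Subgroup.closure s) := by
    rw [Subgroup.closure_le]
    intro x hx
    have : (MulAut.conj g).toMonoidHom x ∈ Subgroup.closure s :=
      Subgroup.subset_closure (by simpa [MulAut.conj_apply] using h g x hx)
    exact this
  have := key hn
  rw [Subgroup.mem_comap] at this
  simpa [MulAut.conj_apply] using this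

instance stallings_normal (p : ℕ) (G : Type*) [Group G] (k : ℕ) :
    (stallings p G k).Normal := by
  induction k with
  | zero => simp only [stallings]; infer_instance
  | succ n ih =>
    cases n with
    | zero => simp only [stallings]; infer_instance
    | succ m =>
      simp only [stallings]
      apply closure_normal_of_conj
      rintro g x (⟨a, y, hy, rfl⟩ | ⟨y, hy, rfl⟩)
      · refine Or.inl ⟨g * a * g⁻¹, g * y * g⁻¹, ih.conj_mem y hy g, ?_⟩
        simp only [commutatorElement_def]
        group
      · refine Or.inr ⟨g * y * g⁻¹, ih.conj_mem y hy g, ?_⟩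
        rw [conj_pow]

theorem stallings_succ_le (p : ℕ) (G : Type*) [Group G] :
    ∀ k, stallings p G (k + 1) ≤ stallings p G k := by
  intro k
  induction k with
  | zero => exact le_top
  | succ n ih =>
    cases n with
    | zero => exact le_top
    | succ m =>
      show stallings p G (m + 3) ≤ stallings p G (m + 2)
      have h3 : stallings p G (m + 3) = Subgroup.closure
          {x : G | (∃ g : G, ∃ y ∈ stallings p G (m + 2), x = ⁅g, y⁆) ∨
            ∃ y ∈ stallings p G (m + 2), x = y ^ p} := rfl
      rw [h3, Subgroup.closure_le]
      rintro x (⟨a, y, hy, rfl⟩ | ⟨y, hy, rfl⟩)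
      · show ⁅a, y⁆ ∈ stallings p G (m + 2)
        simp only [stallings]
        exact Subgroup.subset_closure (Or.inl ⟨a, y, ih hy, rfl⟩)
      · show y ^ p ∈ stallings p G (m + 2)
        simp only [stallings]
        exact Subgroup.subset_closure (Or.inr ⟨y, ih hy, rfl⟩)

theorem stallings_antitone (p : ℕ) (G : Type*) [Group G] :
    Antitone (stallings p G) :=
  antitone_nat_of_succ_le (stallings_succ_le p G)

/-- The canonical projection `G/G^S_{k'} → G/G^S_k` for `k ≤ k'`. -/
def stallingsProj (p : ℕ) (G : Type*) [Group G] (k k' : ℕ) (h : k ≤ k') :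
    (G ⧸ stallings p G k') →* (G ⧸ stallings p G k) :=
  QuotientGroup.map _ _ (MonoidHom.id G) (fun _ hx => stallings_antitone p G h hx)


/-!
Since `Γ` is free, `φ` lifts to an endomorphism `f` of `Q = Γ/Γ^S_{k+2}` with `π ∘ f = φ ∘ π`, so
the image of `f` together with `N = ker π = Q^S_{k+1}` generates `Q`. As `Q^S_{k+2} = 1`, the
subgroup `N` is central of exponent `p`; hence commutators and `p`-th powers in `Q` only depend on
classes modulo `N`, which gives `N ≤ Q^S_2 ≤ im f` (using `k ≥ 1`), and `f` is onto. Finally `Q` is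
finite, being an iterated extension of finitely generated abelian groups of exponent `p`, so `f` is
bijective.
-/

theorem commutatorElement_mul_right_of_mem_center {G : Type*} [Group G] (a b : G) {t : G}
    (ht : t ∈ Subgroup.center G) : ⁅a * t, b⁆ = ⁅a, b⁆ :=
  calc ⁅a * t, b⁆ = a * (t * b) * t⁻¹ * a⁻¹ * b⁻¹ := by group
    _ = a * (b * t) * t⁻¹ * a⁻¹ * b⁻¹ := by rw [Subgroup.mem_center_iff.mp ht b]
    _ = ⁅a, b⁆ := by group

theorem commutatorElement_mul_mul_of_mem_center {G : Type*} [Group G] (a b : G) {t u : G}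
    (ht : t ∈ Subgroup.center G) (hu : u ∈ Subgroup.center G) : ⁅a * t, b * u⁆ = ⁅a, b⁆ := by
  rw [commutatorElement_mul_right_of_mem_center a _ ht, ← commutatorElement_inv,
    commutatorElement_mul_right_of_mem_center b a hu, commutatorElement_inv]

open scoped IsMulCommutative in
theorem finite_of_fg_of_le_center_of_pow_eq_one {G : Type*} [Group G] {p : ℕ} (hp : p ≠ 0)
    {N : Subgroup G} [Group.FG N] (hN : N ≤ Subgroup.center G) (hpow : ∀ x ∈ N, x ^ p = 1) :
    Finite N :=
  have : IsMulCommutative N :=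
    ⟨⟨fun a b => Subtype.ext (Subgroup.mem_center_iff.mp (hN b.2) a)⟩⟩
  CommGroup.finite_of_fg_isMulTorsion N fun x =>
    isOfFinOrder_iff_pow_eq_one.mpr ⟨p, Nat.pos_of_ne_zero hp, Subtype.ext (hpow x x.2)⟩

section Stallings

variable {G H : Type*} [Group G] [Group H] {p : ℕ}

theorem stallings_add_two_le_iff {k : ℕ} {K : Subgroup G} :
    stallings p G (k + 2) ≤ K ↔
      (∀ g : G, ∀ y ∈ stallings p G (k + 1), ⁅g, y⁆ ∈ K) ∧
        ∀ y ∈ stallings p G (k + 1), y ^ p ∈ K := by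
  rw [stallings, Subgroup.closure_le]
  constructor
  · intro h
    exact ⟨fun g y hy => h (Or.inl ⟨g, y, hy, rfl⟩), fun y hy => h (Or.inr ⟨y, hy, rfl⟩)⟩
  · rintro ⟨hcomm, hpow⟩ x (⟨g, y, hy, rfl⟩ | ⟨y, hy, rfl⟩)
    exacts [hcomm g y hy, hpow y hy]

theorem commutatorElement_mem_stallings {k : ℕ} (g : G) {y : G}
    (hy : y ∈ stallings p G (k + 1)) : ⁅g, y⁆ ∈ stallings p G (k + 2) :=
  (stallings_add_two_le_iff.mp le_rfl).1 g y hy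

theorem pow_mem_stallings {k : ℕ} {y : G} (hy : y ∈ stallings p G (k + 1)) :
    y ^ p ∈ stallings p G (k + 2) :=
  (stallings_add_two_le_iff.mp le_rfl).2 y hy

theorem stallings_map_le (f : G →* H) : ∀ k, (stallings p G k).map f ≤ stallings p H k
  | 0 | 1 => le_top
  | k + 2 => by
    rw [Subgroup.map_le_iff_le_comap, stallings_add_two_le_iff]
    have hy : ∀ y ∈ stallings p G (k + 1), f y ∈ stallings p H (k + 1) :=
      fun y hy => stallings_map_le f (k + 1) (Subgroup.mem_map_of_mem f hy)
    refine ⟨fun g y h => ?_, fun y h => ?_⟩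
    · simpa only [Subgroup.mem_comap, map_commutatorElement] using
        commutatorElement_mem_stallings (f g) (hy y h)
    · simpa only [Subgroup.mem_comap, map_pow] using pow_mem_stallings (hy y h)

theorem stallings_map_of_surjective {f : G →* H} (hf : Function.Surjective f) :
    ∀ k, (stallings p G k).map f = stallings p H k
  | 0 | 1 => Subgroup.map_top_of_surjective f hf
  | k + 2 => by
    have ih := stallings_map_of_surjective hf (k + 1)
    refine le_antisymm (stallings_map_le f _) (stallings_add_two_le_iff.mpr ⟨?_, ?_⟩)
    · intro g y hy
      rw [← ih] at hy
      obtain ⟨y, hy, rfl⟩ := hy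
      obtain ⟨g, rfl⟩ := hf g
      exact ⟨⁅g, y⁆, commutatorElement_mem_stallings g hy, map_commutatorElement f g y⟩
    · intro y hy
      rw [← ih] at hy
      obtain ⟨y, hy, rfl⟩ := hy
      exact ⟨y ^ p, pow_mem_stallings hy, map_pow f y p⟩

theorem stallings_quotient_eq_bot (p : ℕ) (G : Type*) [Group G] (k : ℕ) :
    stallings p (G ⧸ stallings p G k) k = ⊥ := by
  rw [← stallings_map_of_surjective (QuotientGroup.mk'_surjective _) k,
    Subgroup.map_eq_bot_iff, QuotientGroup.ker_mk']

theorem stallings_le_center_of_eq_bot {k : ℕ} (h : stallings p G (k + 2) = ⊥) :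
    stallings p G (k + 1) ≤ Subgroup.center G := fun _ hy =>
  Subgroup.mem_center_iff.mpr fun g =>
    commutatorElement_eq_one_iff_mul_comm.mp
      (Subgroup.mem_bot.mp (h ▸ commutatorElement_mem_stallings g hy))

theorem pow_eq_one_of_stallings_eq_bot {k : ℕ} (h : stallings p G (k + 2) = ⊥) {y : G}
    (hy : y ∈ stallings p G (k + 1)) : y ^ p = 1 :=
  Subgroup.mem_bot.mp (h ▸ pow_mem_stallings hy)

theorem eq_top_of_sup_stallings_eq_top {k : ℕ} (hk : 1 ≤ k) (hbot : stallings p G (k + 2) = ⊥)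
    {K : Subgroup G} (hK : K ⊔ stallings p G (k + 1) = ⊤) : K = ⊤ := by
  have hdecomp (x : G) : ∃ y ∈ K, ∃ t ∈ stallings p G (k + 1), y * t = x :=
    Subgroup.mem_sup_of_normal_right.mp (hK ▸ Subgroup.mem_top x)
  have hcenter := stallings_le_center_of_eq_bot hbot
  have h2 : stallings p G 2 ≤ K := by
    refine stallings_add_two_le_iff.mpr ⟨fun g y _ => ?_, fun y _ => ?_⟩
    · obtain ⟨a, ha, t, ht, rfl⟩ := hdecomp g
      obtain ⟨b, hb, u, hu, rfl⟩ := hdecomp y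
      rw [commutatorElement_mul_mul_of_mem_center a b (hcenter ht) (hcenter hu)]
      exact K.mul_mem (K.mul_mem (K.mul_mem ha hb) (K.inv_mem ha)) (K.inv_mem hb)
    · obtain ⟨a, ha, t, ht, rfl⟩ := hdecomp y
      rw [Commute.mul_pow (Subgroup.mem_center_iff.mp (hcenter ht) a),
        pow_eq_one_of_stallings_eq_bot hbot ht, mul_one]
      exact K.pow_mem ha p
  have hN : stallings p G (k + 1) ≤ K := (stallings_antitone p G (by omega)).trans h2
  rwa [sup_eq_left.mpr hN] at hK

theorem finite_of_stallings_eq_bot (hp : p ≠ 0) :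
    ∀ {G : Type*} [Group G] [Group.FG G] (k : ℕ), stallings p G k = ⊥ → Finite G
  | _, _, _, 0, h | _, _, _, 1, h =>
    have := Subgroup.subsingleton_iff.mp (subsingleton_iff_bot_eq_top.mp h.symm)
    Finite.of_subsingleton
  | G, _, _, k + 2, h => by
    have : Finite (G ⧸ stallings p G (k + 1)) :=
      finite_of_stallings_eq_bot hp (k + 1) (stallings_quotient_eq_bot p G (k + 1))
    have := Subgroup.finiteIndex_of_finite_quotient (H := stallings p G (k + 1))
    have : Group.FG (stallings p G (k + 1)) := Subgroup.fg_of_index_ne_zero _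
    have : Finite (stallings p G (k + 1)) := finite_of_fg_of_le_center_of_pow_eq_one hp
      (stallings_le_center_of_eq_bot h) fun _ => pow_eq_one_of_stallings_eq_bot h
    exact Finite.of_subgroup_quotient (stallings p G (k + 1))

end Stallings

section StallingsProj

variable {G : Type*} [Group G] {p k k' : ℕ}

theorem stallingsProj_surjective (h : k ≤ k') : Function.Surjective (stallingsProj p G k k' h) :=
  QuotientGroup.map_surjective_of_surjective _ _ _ QuotientGroup.mk_surjective _

theorem ker_stallingsProj (h : k ≤ k') :
    (stallingsProj p G k k' h).ker = stallings p (G ⧸ stallings p G k') k := by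
  refine (QuotientGroup.ker_map _ _ _ _).trans ?_
  rw [Subgroup.comap_id, stallings_map_of_surjective (QuotientGroup.mk'_surjective _)]

theorem surjective_of_stallingsProj_comp (hk : 1 ≤ k)
    {f : G ⧸ stallings p G (k + 2) →* G ⧸ stallings p G (k + 2)}
    {φ : G ⧸ stallings p G (k + 1) →* G ⧸ stallings p G (k + 1)} (hφ : Function.Surjective φ)
    (hf : ∀ x, stallingsProj p G (k + 1) (k + 2) (Nat.le_succ _) (f x) =
      φ (stallingsProj p G (k + 1) (k + 2) (Nat.le_succ _) x)) :
    Function.Surjective f := by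
  set π := stallingsProj p G (k + 1) (k + 2) (Nat.le_succ _)
  have hcomp : π.comp f = φ.comp π := MonoidHom.ext hf
  have hrange : f.range ⊔ stallings p _ (k + 1) = ⊤ := by
    have hsurj : Function.Surjective (φ.comp π) := hφ.comp (stallingsProj_surjective _)
    rw [← ker_stallingsProj (Nat.le_succ _), ← Subgroup.comap_map_eq, MonoidHom.map_range, hcomp,
      MonoidHom.range_eq_top.mpr hsurj, Subgroup.comap_top]
  exact MonoidHom.range_eq_top.mp
    (eq_top_of_sup_stallings_eq_top hk (stallings_quotient_eq_bot p G (k + 2)) hrange)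

end StallingsProj

theorem FreeGroup.exists_lift_along_stallingsProj {α : Type*} {p k k' : ℕ} (h : k ≤ k')
    (φ : FreeGroup α ⧸ stallings p (FreeGroup α) k →* FreeGroup α ⧸ stallings p (FreeGroup α) k) :
    ∃ f : FreeGroup α ⧸ stallings p (FreeGroup α) k' →*
        FreeGroup α ⧸ stallings p (FreeGroup α) k',
      ∀ x, stallingsProj p _ k k' h (f x) = φ (stallingsProj p _ k k' h x) := by
  set π := stallingsProj p (FreeGroup α) k k' h
  choose s hs using stallingsProj_surjective (p := p) (G := FreeGroup α) h
  set ψ := FreeGroup.lift fun a => s (φ (QuotientGroup.mk (FreeGroup.of a)))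
  have hψ : stallings p (FreeGroup α) k' ≤ ψ.ker := by
    rw [← Subgroup.map_eq_bot_iff, ← le_bot_iff, ← stallings_quotient_eq_bot p _ k']
    exact stallings_map_le ψ k'
  have hπψ : π.comp ψ = φ.comp (QuotientGroup.mk' _) :=
    FreeGroup.ext_hom _ _ fun a => by
      rw [MonoidHom.comp_apply, FreeGroup.lift_apply_of]
      exact hs _
  refine ⟨QuotientGroup.lift _ ψ hψ, fun x => QuotientGroup.induction_on x fun g => ?_⟩
  exact DFunLike.congr_fun hπψ g

theorem aut_lifts_along_stallings_proj (n p : ℕ) (hp : p.Prime) (k : ℕ) (hk : 1 ≤ k)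
    (φ : MulAut (FreeGroup (Fin n) ⧸ stallings p (FreeGroup (Fin n)) (k + 1))) :
    ∃ Φ : MulAut (FreeGroup (Fin n) ⧸ stallings p (FreeGroup (Fin n)) (k + 2)),
      ∀ x, stallingsProj p (FreeGroup (Fin n)) (k + 1) (k + 2) (Nat.le_succ _) (Φ x) =
        φ (stallingsProj p (FreeGroup (Fin n)) (k + 1) (k + 2) (Nat.le_succ _) x) := by
  obtain ⟨f, hf⟩ := FreeGroup.exists_lift_along_stallingsProj (Nat.le_succ _) φ.toMonoidHom
  have hsurj := surjective_of_stallingsProj_comp hk φ.surjective hf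
  have : Finite (FreeGroup (Fin n) ⧸ stallings p (FreeGroup (Fin n)) (k + 2)) :=
    finite_of_stallings_eq_bot hp.ne_zero (k + 2) (stallings_quotient_eq_bot p _ (k + 2))
  exact ⟨MulEquiv.ofBijective f ⟨Finite.injective_iff_surjective.mpr hsurj, hsurj⟩, hf⟩
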